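/- arXiv:2412.07054 — 2 statements merged into one kernel-verified Lean document; each statement's English description precedes it below -/
import Mathlib

section
/- Let (r,s) ∈ 𝕊₂′ and write r = a/b in lowest terms (so gcd(a,b)=1). Then there exists a rational number s′ such that (1/b, s′) ∈ 𝕊₂′ and the pairs (r,s) and (1/b, s′) are conjugate. -/
/-- The set 𝕊₂′ of pairs of rationals (r,s) with 0 < r < s < 3/2 such that
24s and 8(r+s) are both integers. -/
def S2' : Set (ℚ × ℚ) :=
  {p : ℚ × ℚ | 0 < p.1 ∧ p.1 < p.2 ∧ p.2 < 3/2 ∧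
    (∃ n : ℤ, 24 * p.2 = (n : ℚ)) ∧ (∃ m : ℤ, 8 * (p.1 + p.2) = (m : ℚ))}

/-- Two pairs (r,s), (r′,s′) are conjugate: with M = lcm(2, den r, den s), there is an
integer c coprime to M with r − c·r′ and s − c·s′ both integers. -/
def IsConjugate (r s r' s' : ℚ) : Prop :=
  ∃ c : ℤ, Int.gcd c (Nat.lcm 2 (Nat.lcm r.den s.den)) = 1 ∧
    (∃ k : ℤ, r - c * r' = (k : ℚ)) ∧ (∃ k : ℤ, s - c * s' = (k : ℚ))

/-- Lift a residue coprime to `b` to an integer coprime to 24, when `b ∣ 24`. -/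
lemma exists_good_c (a : ℤ) (b : ℕ) (hb : b ≠ 0) (hdvd : b ∣ 24) (ha : 0 ≤ a)
    (hcop : a.natAbs.Coprime b) :
    ∃ c : ℤ, Nat.Coprime c.natAbs 24 ∧ (b : ℤ) ∣ a - c := by
  haveI : NeZero b := ⟨hb⟩
  obtain ⟨u, hu⟩ := ZMod.unitsMap_surjective (m := 24) hdvd (ZMod.unitOfCoprime a.natAbs hcop)
  refine ⟨((u : ZMod 24).val : ℤ), by simpa [-ZMod.natCast_val] using ZMod.val_coe_unit_coprime u, ?_⟩
  rw [← ZMod.intCast_zmod_eq_zero_iff_dvd]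
  have h1 : ((a.natAbs : ℕ) : ZMod b) = (((u : ZMod 24).val : ℕ) : ZMod b) := by
    have h2 := congrArg Units.val hu
    rw [ZMod.unitsMap_def] at h2
    simp only [Units.coe_map, MonoidHom.coe_coe, ZMod.castHom_apply,
      ZMod.coe_unitOfCoprime] at h2
    rw [ZMod.natCast_val, h2]
  have h3 : ((a : ℤ) : ZMod b) = (((u : ZMod 24).val : ℤ) : ZMod b) := by
    rw [← Int.natAbs_of_nonneg ha, Int.cast_natCast, Int.cast_natCast]
    exact h1
  rw [Int.cast_sub, h3, sub_self]

/-- Every pair (r,s) ∈ 𝕊₂′, with r = a/b in lowest terms, is conjugate to a pair of the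
form (1/b, s′) ∈ 𝕊₂′. -/
theorem conjugate_to_one_over_b (r s : ℚ) (h : (r, s) ∈ S2') :
    ∃ s' : ℚ, (1 / (r.den : ℚ), s') ∈ S2' ∧ IsConjugate r s (1 / (r.den : ℚ)) s' := by
  obtain ⟨hr0, hrs, hs32, ⟨N, hN⟩, ⟨m, hm⟩⟩ := h
  dsimp only at hr0 hrs hs32 hN hm
  have hden0 : (r.den : ℚ) ≠ 0 := by
    exact_mod_cast r.den_nz
  by_cases hb1 : r.den = 1
  · -- here r = 1
    have h1 : (r.num : ℚ) = r := by
      conv_rhs => rw [← Rat.num_div_den r]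
      rw [hb1]; simp
    have hnum : r.num = 1 := by
      have h0 : 0 < r.num := Rat.num_pos.mpr hr0
      have h2 : (r.num : ℚ) < 3/2 := by rw [h1]; linarith
      have h4 : r.num < 2 := by exact_mod_cast (by linarith : (r.num : ℚ) < 2)
      omega
    have hr1 : r = 1 := by rw [← h1, hnum]; norm_num
    have hinv : (1 / (r.den : ℚ)) = r := by rw [hb1, hr1]; norm_num
    refine ⟨s, ?_, 1, ?_, ⟨0, ?_⟩, ⟨0, ?_⟩⟩
    · rw [hinv]; exact ⟨hr0, hrs, hs32, ⟨N, hN⟩, ⟨m, hm⟩⟩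
    · simp
    · rw [hinv]; push_cast; ring
    · push_cast; ring
  · -- main case: r.den ≥ 2
    have hb2 : 2 ≤ r.den := by
      have := r.den_pos; omega
    set Nr : ℤ := 3 * m - N with hNrdef
    have hNr : (24 : ℚ) * r = (Nr : ℚ) := by rw [hNrdef]; push_cast; linarith
    have hr_eq : r = (Nr : ℚ) / 24 := by rw [← hNr]; ring
    have hs_eq : s = (N : ℚ) / 24 := by rw [← hN]; ring
    have hbdvd : (r.den : ℤ) ∣ 24 := by
      have : r = ((Nr : ℚ)) / ((24 : ℤ) : ℚ) := by push_cast; exact hr_eq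
      rw [this, ← Rat.divInt_eq_div]
      exact Rat.den_dvd Nr 24
    have hsdvd : (s.den : ℤ) ∣ 24 := by
      have : s = ((N : ℚ)) / ((24 : ℤ) : ℚ) := by push_cast; exact hs_eq
      rw [this, ← Rat.divInt_eq_div]
      exact Rat.den_dvd N 24
    -- integer facts
    have hN36 : N < 36 := by
      have : (N : ℚ) < 36 := by rw [← hN]; linarith
      exact_mod_cast this
    have hNrN : Nr < N := by
      have : (Nr : ℚ) < (N : ℚ) := by rw [← hNr, ← hN]; linarith
      exact_mod_cast this
    have hNr0 : 0 < Nr := by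
      have : (0 : ℚ) < (Nr : ℚ) := by rw [← hNr]; linarith
      exact_mod_cast this
    set B : ℤ := 24 / (r.den : ℤ) with hBdef
    have hbB : (r.den : ℤ) * B = 24 := Int.mul_ediv_cancel' hbdvd
    have hnum_pos : 0 < r.num := Rat.num_pos.mpr hr0
    have hBnum : B * r.num = Nr := by
      have hq : (24 : ℚ) * (r.num : ℚ) = (Nr : ℚ) * (r.den : ℚ) := by
        have h5 := hNr
        rw [← Rat.num_div_den r] at h5
        field_simp at h5
        linarith
      have hz : (24 : ℤ) * r.num = Nr * r.den := by exact_mod_cast hq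
      have : (r.den : ℤ) * (B * r.num) = (r.den : ℤ) * Nr := by
        rw [← mul_assoc, hbB]; linarith
      exact mul_left_cancel₀ (by exact_mod_cast r.den_nz) this
    -- find c
    obtain ⟨c, hc24, hcb⟩ := exists_good_c r.num r.den r.den_nz
      (by exact_mod_cast hbdvd) (le_of_lt hnum_pos) r.reduced
    have hgcd24 : Int.gcd c 24 = 1 := hc24
    -- Bezout inverse of c mod 24
    set d : ℤ := Int.gcdA c 24 with hddef
    have hcd : (24 : ℤ) ∣ c * d - 1 := by
      have hb0 := Int.gcd_eq_gcd_ab c 24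
      rw [hgcd24] at hb0
      exact ⟨-Int.gcdB c 24, by push_cast at hb0 ⊢; linarith⟩
    set e : ℤ := (d * N) % 24 with hedef
    have he0 : 0 ≤ e := Int.emod_nonneg _ (by norm_num)
    have he24 : e < 24 := Int.emod_lt_of_pos _ (by norm_num)
    have hedN : (24 : ℤ) ∣ e - d * N := by
      rw [hedef, Int.emod_def]
      exact ⟨-((d * N) / 24), by ring⟩
    have hce : (24 : ℤ) ∣ c * e - N := by
      obtain ⟨x, hx⟩ := hedN
      obtain ⟨y, hy⟩ := hcd
      exact ⟨c * x + y * N, by linear_combination c * hx + N * hy⟩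
    have hcB : (24 : ℤ) ∣ c * B - Nr := by
      obtain ⟨z, hz⟩ := hcb
      exact ⟨-z, by linear_combination (-B) * hz + hBnum - z * hbB⟩
    have h3 : (3 : ℤ) ∣ B + e := by
      have hc3 : IsCoprime (3 : ℤ) c := by
        rw [Int.isCoprime_iff_gcd_eq_one, Int.gcd_comm]
        exact Nat.Coprime.coprime_dvd_right (by norm_num) hc24
      have hmul : (3 : ℤ) ∣ c * (B + e) := by
        obtain ⟨x, hx⟩ := hcB
        obtain ⟨y, hy⟩ := hce
        refine ⟨8 * x + 8 * y + m, ?_⟩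
        have : Nr + N = 3 * m := by omega
        linear_combination hx + hy + this
      exact hc3.dvd_of_dvd_mul_left hmul
    have hcodd : ¬ (2 : ℤ) ∣ c := by
      intro hdc
      have h2 : (2 : ℤ) ∣ Int.gcd c 24 := Int.dvd_coe_gcd hdc (by norm_num)
      rw [hgcd24] at h2
      norm_num at h2
    -- choose E
    have key : ∃ E : ℤ, 24 < E * r.den ∧ E < 36 ∧ (3 : ℤ) ∣ B + E ∧ (24 : ℤ) ∣ N - c * E := by
      by_cases hEb : 24 < e * (r.den : ℤ)
      · exact ⟨e, hEb, by omega, h3, by obtain ⟨y, hy⟩ := hce; exact ⟨-y, by linarith⟩⟩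
      · refine ⟨e + 24, ?_, ?_, ?_, ?_⟩
        · nlinarith [he0, (by exact_mod_cast hb2 : (2:ℤ) ≤ (r.den : ℤ))]
        · -- need e < 12
          have he12 : e < 12 := by
            rcases eq_or_lt_of_le hb2 with hb2' | hb3
            · -- b = 2
              have hB12 : B = 12 := by
                have : ((r.den : ℤ)) = 2 := by exact_mod_cast hb2'.symm
                rw [this] at hbB; linarith
              have hNr12 : 12 ≤ Nr := by
                rw [← hBnum, hB12]; nlinarith
              by_contra hcon
              push_neg at hcon
              have he12' : e = 12 := by
                have : ((r.den : ℤ)) = 2 := by exact_mod_cast hb2'.symm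
                rw [this] at hEb
                omega
              obtain ⟨w, hw⟩ := hce
              obtain ⟨t, ht⟩ : ∃ t : ℤ, c = 2 * t + 1 := by
                rcases Int.even_or_odd c with he | ho
                · exact absurd he.two_dvd hcodd
                · obtain ⟨k, hk⟩ := ho; exact ⟨k, by omega⟩
              rw [he12'] at hw
              omega
            · -- b ≥ 3
              have hb3' : (3 : ℤ) ≤ (r.den : ℤ) := by exact_mod_cast hb3
              nlinarith
          omega
        · obtain ⟨k, hk⟩ := h3
          exact ⟨k + 8, by omega⟩
        · obtain ⟨y, hy⟩ := hce
          exact ⟨-y - c, by linarith⟩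
    obtain ⟨E, hE1, hE2, hE3, hE4⟩ := key
    have hE0 : 0 < E := by
      by_contra hc'
      push_neg at hc'
      have hdz : (0 : ℤ) < (r.den : ℤ) := by exact_mod_cast r.den_pos
      nlinarith
    have hdenQpos : (0 : ℚ) < (r.den : ℚ) := by exact_mod_cast r.den_pos
    have hE1Q : (24 : ℚ) < (E : ℚ) * (r.den : ℚ) := by exact_mod_cast hE1
    have hE2Q : (E : ℚ) < 36 := by exact_mod_cast hE2
    have hbBQ : ((r.den : ℚ)) * (B : ℚ) = 24 := by exact_mod_cast hbB
    refine ⟨(E : ℚ) / 24, ⟨?_, ?_, ?_, ⟨E, by ring⟩, ?_⟩, c, ?_, ?_, ?_⟩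
    · positivity
    · rw [div_lt_div_iff₀ hdenQpos (by norm_num : (0:ℚ) < 24)]
      linarith
    · rw [div_lt_div_iff₀ (by norm_num : (0:ℚ) < 24) (by norm_num : (0:ℚ) < 2)]
      linarith
    · obtain ⟨k, hk⟩ := hE3
      refine ⟨k, ?_⟩
      have hkQ : (B : ℚ) + (E : ℚ) = 3 * (k : ℚ) := by exact_mod_cast hk
      field_simp
      linear_combination 8 * (r.den : ℚ) * hkQ - 8 * hbBQ
    · -- gcd condition
      have hM24 : Nat.lcm 2 (Nat.lcm r.den s.den) ∣ 24 := by
        refine Nat.lcm_dvd (by norm_num) (Nat.lcm_dvd ?_ ?_)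
        · exact_mod_cast hbdvd
        · exact_mod_cast hsdvd
      exact Nat.Coprime.coprime_dvd_right hM24 hc24
    · obtain ⟨z, hz⟩ := hcb
      refine ⟨z, ?_⟩
      have hzQ : (r.num : ℚ) - (c : ℚ) = (r.den : ℚ) * (z : ℚ) := by exact_mod_cast hz
      have hBnumQ : (B : ℚ) * (r.num : ℚ) = (Nr : ℚ) := by exact_mod_cast hBnum
      have hBQ0 : (B : ℚ) ≠ 0 := by
        intro h0
        rw [h0, mul_zero] at hbBQ
        norm_num at hbBQ
      have hrden : (r.den : ℚ) * r = (r.num : ℚ) := by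
        have h9 : (B : ℚ) * ((r.den : ℚ) * r - (r.num : ℚ)) = 0 := by
          linear_combination r * hbBQ + hNr - hBnumQ
        have h10 := (mul_eq_zero.mp h9).resolve_left hBQ0
        linarith
      field_simp
      linear_combination hzQ + hrden
    · obtain ⟨w, hw⟩ := hE4
      refine ⟨w, ?_⟩
      have hwQ : (N : ℚ) - (c : ℚ) * (E : ℚ) = 24 * (w : ℚ) := by exact_mod_cast hw
      field_simp
      linear_combination hN + hwQ
end

section
/- For every rational number r with 0 < r < 1 one has F(r,1) = 2^{4−8r} · csc(πr) · F(1−r, 3/2−r). -/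
/-- The Pochhammer symbol (x)_k = x(x+1)⋯(x+k−1). -/
noncomputable def poch (x : ℝ) (k : ℕ) : ℝ := ∏ i ∈ Finset.range k, (x + i)

/-- The hypergeometric series ₃F₂(a1,a2,a3;b1,b2;1). -/
noncomputable def threeF2 (a1 a2 a3 b1 b2 : ℝ) : ℝ :=
  ∑' k : ℕ, poch a1 k * poch a2 k * poch a3 k /
    (poch b1 k * poch b2 k * (Nat.factorial k : ℝ))

/-- The Beta function B(a,b) = Γ(a)Γ(b)/Γ(a+b). -/
noncomputable def betaFn (a b : ℝ) : ℝ :=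
  Real.Gamma a * Real.Gamma b / Real.Gamma (a + b)

/-- The normalized hypergeometric value
F(r,s) = (2^{1−4r}·B(r,s−r)/N(r)) · ₃F₂(1/2,1/2,r;1,s;1), where N(r) = 2·den(r). -/
noncomputable def Fval (r s : ℚ) : ℝ :=
  (2:ℝ) ^ ((1:ℝ) - 4 * (r:ℝ)) * betaFn (r:ℝ) ((s:ℝ) - (r:ℝ)) / (2 * (r.den : ℝ)) *
    threeF2 (1/2) (1/2) (r:ℝ) 1 (s:ℝ)

open Finset in
lemma poch_zero (x : ℝ) : poch x 0 = 1 := by simp [poch]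

lemma poch_succ (x : ℝ) (k : ℕ) : poch x (k+1) = poch x k * (x + k) := by
  simp [poch, Finset.prod_range_succ]

lemma poch_pos {x : ℝ} (hx : 0 < x) (k : ℕ) : 0 < poch x k := by
  refine Finset.prod_pos fun i _ => by positivity

lemma poch_nonneg {x : ℝ} (hx : 0 < x) (k : ℕ) : 0 ≤ poch x k := (poch_pos hx k).le

lemma poch_one (k : ℕ) : poch 1 k = (Nat.factorial k : ℝ) := by
  induction k with
  | zero => simp [poch_zero]
  | succ n ih => rw [poch_succ, ih, Nat.factorial_succ]; push_cast; ring

lemma poch_le_poch {x y : ℝ} (hx : 0 < x) (hxy : x ≤ y) (k : ℕ) : poch x k ≤ poch y k := by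
  refine Finset.prod_le_prod (fun i _ => by positivity) (fun i _ => by linarith)

lemma Gamma_poch {x : ℝ} (hx : 0 < x) (k : ℕ) :
    Real.Gamma (x + k) = Real.Gamma x * poch x k := by
  induction k with
  | zero => simp [poch_zero]
  | succ n ih =>
      have h : x + (n+1:ℕ) = (x + n) + 1 := by push_cast; ring
      rw [h, Real.Gamma_add_one (by positivity), ih, poch_succ]; ring

lemma poch_ratio_aux {y c : ℝ} (hy : 0 < y) (hc0 : 0 ≤ c) (hc1 : c ≤ 1) (k : ℕ) :
    poch y k * (y + k) ^ c ≤ y ^ c * poch (y + c) k := by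
  induction k with
  | zero => simp [poch_zero]
  | succ n ih =>
      have hyn : (0:ℝ) < y + n := by positivity
      have hyn1 : (0:ℝ) < y + n + 1 := by linarith
      have amgm : (y+n) ^ ((1:ℝ)-c) * (y+n+1) ^ c ≤ (1-c) * (y+n) + c * (y+n+1) :=
        Real.geom_mean_le_arith_mean2_weighted (by linarith) hc0 hyn.le hyn1.le (by ring)
      have key : (y + n) * (y + (n+1:ℕ)) ^ c ≤ (y + n) ^ c * (y + c + n) := by
        have hsplit : (y + n) = (y+n) ^ c * (y+n) ^ ((1:ℝ)-c) := by
          rw [← Real.rpow_add hyn]; ring_nf; rw [Real.rpow_one]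
        have h2 : (y + (n+1:ℕ) : ℝ) = y + n + 1 := by push_cast; ring
        rw [h2]
        nth_rewrite 1 [hsplit]
        rw [mul_assoc]
        refine mul_le_mul_of_nonneg_left ?_ (Real.rpow_nonneg hyn.le c)
        calc (y+n) ^ ((1:ℝ)-c) * (y+n+1) ^ c ≤ (1-c) * (y+n) + c * (y+n+1) := amgm
          _ = y + c + n := by ring
      calc poch y (n+1) * (y + (n+1:ℕ)) ^ c
          = poch y n * ((y + n) * (y + (n+1:ℕ)) ^ c) := by rw [poch_succ]; ring
        _ ≤ poch y n * ((y + n) ^ c * (y + c + n)) := by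
            refine mul_le_mul_of_nonneg_left key (poch_nonneg hy n)
        _ = (poch y n * (y + n) ^ c) * (y + c + n) := by ring
        _ ≤ (y ^ c * poch (y + c) n) * (y + c + n) := by
            refine mul_le_mul_of_nonneg_right ih (by positivity)
        _ = y ^ c * poch (y + c) (n+1) := by rw [poch_succ]; ring

lemma poch_ratio_decay {y c : ℝ} (hy : 0 < y) (hy1 : y ≤ 1) (hc0 : 0 ≤ c) (hc1 : c ≤ 1) (k : ℕ) :
    poch y k / poch (y + c) k ≤ ((k:ℝ) + 1) ^ (-c) := by
  have hyc : (0:ℝ) < y + c := by linarith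
  have hpc : (0:ℝ) < poch (y+c) k := poch_pos hyc k
  have hk1 : (0:ℝ) < (k:ℝ) + 1 := by positivity
  have hykpos : (0:ℝ) < y + k := by positivity
  rw [div_le_iff₀ hpc]
  have h1 : poch y k * (y + k) ^ c ≤ y ^ c * poch (y + c) k := poch_ratio_aux hy hc0 hc1 k
  -- y^c / (y+k)^c ≤ (k+1)^(-c)  since  y*(k+1) ≤ y+k
  have h2 : y ^ c ≤ ((k:ℝ)+1) ^ (-c) * (y + k) ^ c := by
    have hbase : y ≤ ((k:ℝ)+1)⁻¹ * (y + k) := by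
      rw [← sub_nonneg]
      have he : ((k:ℝ)+1)⁻¹ * (y+k) - y = (k - y*k) / (k+1) := by field_simp; ring
      rw [he]
      have h3 : y * k ≤ k := by nlinarith [Nat.cast_nonneg (α := ℝ) k]
      have h4 : (0:ℝ) ≤ k - y*k := by linarith
      positivity
    calc y ^ c ≤ (((k:ℝ)+1)⁻¹ * (y + k)) ^ c := Real.rpow_le_rpow hy.le hbase hc0
      _ = (((k:ℝ)+1)⁻¹) ^ c * (y + k) ^ c := Real.mul_rpow (by positivity) (by positivity)
      _ = ((k:ℝ)+1) ^ (-c) * (y + k) ^ c := by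
          rw [Real.inv_rpow hk1.le, ← Real.rpow_neg hk1.le]
    
  calc poch y k = poch y k * (y+k)^c * ((y+k)^c)⁻¹ := by
        field_simp
    _ ≤ y ^ c * poch (y + c) k * ((y+k)^c)⁻¹ := by
        refine mul_le_mul_of_nonneg_right h1 (by positivity)
    _ ≤ (((k:ℝ)+1) ^ (-c) * (y + k) ^ c) * poch (y + c) k * ((y+k)^c)⁻¹ := by
        refine mul_le_mul_of_nonneg_right (mul_le_mul_of_nonneg_right h2 hpc.le) (by positivity)
    _ = ((k:ℝ)+1) ^ (-c) * poch (y + c) k := by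
        field_simp

/-- coefficients of the binomial series for (1-x)^(-1/2) -/
noncomputable def cb (k : ℕ) : ℝ := poch 2⁻¹ k / (Nat.factorial k : ℝ)

lemma cb_nonneg (k : ℕ) : 0 ≤ cb k := by
  have h1 := poch_pos (x := 2⁻¹) (by norm_num) k
  have h2 : (0:ℝ) < (Nat.factorial k : ℝ) := by exact_mod_cast Nat.factorial_pos k
  rw [cb]; positivity

lemma cb_zero : cb 0 = 1 := by simp [cb, poch_zero]

lemma cb_le_one (k : ℕ) : cb k ≤ 1 := by
  rw [cb, div_le_one (by positivity)]
  calc poch 2⁻¹ k ≤ poch 1 k := poch_le_poch (by norm_num) (by norm_num) k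
    _ = _ := poch_one k

lemma cb_rec (k : ℕ) : ((k:ℝ)+1) * cb (k+1) = ((k:ℝ) + 2⁻¹) * cb k := by
  rw [cb, cb, poch_succ, Nat.factorial_succ]
  have h1 : (Nat.factorial k : ℝ) ≠ 0 := by positivity
  push_cast
  field_simp
  ring

open Finset in
lemma cb_reflect_sum (k : ℕ) :
    2 * (∑ j ∈ range (k+1), (j:ℝ) * (cb j * cb (k-j)))
      = (k:ℝ) * ∑ j ∈ range (k+1), cb j * cb (k-j) := by
  have hrefl : ∑ j ∈ range (k+1), (j:ℝ) * (cb j * cb (k-j))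
      = ∑ j ∈ range (k+1), ((k-j:ℕ):ℝ) * (cb (k-j) * cb j) := by
    rw [← Finset.sum_range_reflect (fun j => (j:ℝ) * (cb j * cb (k-j))) (k+1)]
    refine Finset.sum_congr rfl fun j hj => ?_
    have hj' : j ≤ k := Nat.lt_succ_iff.mp (Finset.mem_range.mp hj)
    have e1 : k + 1 - 1 - j = k - j := by omega
    have e2 : k - (k - j) = j := by omega
    rw [e1, e2]
  calc 2 * (∑ j ∈ range (k+1), (j:ℝ) * (cb j * cb (k-j)))
      = (∑ j ∈ range (k+1), (j:ℝ) * (cb j * cb (k-j)))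
        + ∑ j ∈ range (k+1), ((k-j:ℕ):ℝ) * (cb (k-j) * cb j) := by rw [← hrefl]; ring
    _ = ∑ j ∈ range (k+1), (((j:ℝ) + ((k-j:ℕ):ℝ)) * (cb j * cb (k-j))) := by
        rw [← Finset.sum_add_distrib]
        refine Finset.sum_congr rfl fun j hj => ?_
        ring
    _ = (k:ℝ) * ∑ j ∈ range (k+1), cb j * cb (k-j) := by
        rw [Finset.mul_sum]
        refine Finset.sum_congr rfl fun j hj => ?_
        have hj' : j ≤ k := Nat.lt_succ_iff.mp (Finset.mem_range.mp hj)
        rw [Nat.cast_sub hj']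
        ring

open Finset in
lemma cb_conv (k : ℕ) : ∑ j ∈ range (k+1), cb j * cb (k-j) = 1 := by
  induction k with
  | zero => simp [cb_zero]
  | succ n ih =>
      have key : ((n:ℝ)+1) * ∑ j ∈ range (n+2), cb j * cb (n+1-j)
          = ((n:ℝ)+1) * ∑ j ∈ range (n+1), cb j * cb (n-j) := by
        have h2 : ((n:ℝ)+1) * ∑ j ∈ range (n+2), cb j * cb (n+1-j)
            = 2 * ∑ j ∈ range (n+2), (j:ℝ) * (cb j * cb (n+1-j)) := by
          rw [cb_reflect_sum (n+1)]; push_cast; ring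
        have h3 : ∑ j ∈ range (n+2), (j:ℝ) * (cb j * cb (n+1-j))
            = ∑ i ∈ range (n+1), ((i:ℝ)+1) * (cb (i+1) * cb (n-i)) := by
          rw [Finset.sum_range_succ' (fun j => (j:ℝ) * (cb j * cb (n+1-j))) (n+1)]
          simp
        have h4 : ∑ i ∈ range (n+1), ((i:ℝ)+1) * (cb (i+1) * cb (n-i))
            = ∑ i ∈ range (n+1), ((i:ℝ)+2⁻¹) * (cb i * cb (n-i)) := by
          refine Finset.sum_congr rfl fun i _ => ?_
          have := cb_rec i
          calc ((i:ℝ)+1) * (cb (i+1) * cb (n-i)) = (((i:ℝ)+1) * cb (i+1)) * cb (n-i) := by ring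
            _ = (((i:ℝ)+2⁻¹) * cb i) * cb (n-i) := by rw [this]
            _ = _ := by ring
        have h5 : ∑ i ∈ range (n+1), ((i:ℝ)+2⁻¹) * (cb i * cb (n-i))
            = (∑ i ∈ range (n+1), (i:ℝ) * (cb i * cb (n-i)))
              + 2⁻¹ * ∑ i ∈ range (n+1), cb i * cb (n-i) := by
          rw [Finset.mul_sum, ← Finset.sum_add_distrib]
          refine Finset.sum_congr rfl fun i _ => by ring
        have h6 : 2 * ∑ i ∈ range (n+1), (i:ℝ) * (cb i * cb (n-i))
            = (n:ℝ) * ∑ i ∈ range (n+1), cb i * cb (n-i) := cb_reflect_sum n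
        rw [h2, h3, h4, h5]
        linarith [h6]
      have hpos : ((n:ℝ)+1) ≠ 0 := by positivity
      exact mul_left_cancel₀ hpos (key.trans (by rw [ih]))

lemma summable_cb_pow {x : ℝ} (h0 : 0 ≤ x) (h1 : x < 1) :
    Summable (fun k : ℕ => cb k * x ^ k) := by
  refine Summable.of_nonneg_of_le (fun k => by have := cb_nonneg k; positivity)
    (fun k => ?_) (summable_geometric_of_lt_one h0 h1)
  calc cb k * x ^ k ≤ 1 * x ^ k :=
        mul_le_mul_of_nonneg_right (cb_le_one k) (by positivity)
    _ = x ^ k := one_mul _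

lemma hasSum_cb {x : ℝ} (h0 : 0 ≤ x) (h1 : x < 1) :
    HasSum (fun k : ℕ => cb k * x ^ k) ((1 - x) ^ (-(2:ℝ)⁻¹)) := by
  have hs := summable_cb_pow h0 h1
  set f : ℝ := ∑' k : ℕ, cb k * x ^ k with hf
  have hnorm : Summable (fun k : ℕ => ‖cb k * x ^ k‖) := by
    refine hs.congr fun k => ?_
    rw [Real.norm_eq_abs, abs_of_nonneg (by have := cb_nonneg k; positivity)]
  have hcauchy : f * f = ∑' k : ℕ, ∑ j ∈ Finset.range (k+1), (cb j * x ^ j) * (cb (k-j) * x ^ (k-j)) := by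
    exact tsum_mul_tsum_eq_tsum_sum_range_of_summable_norm hnorm hnorm
  have hterm : ∀ k : ℕ, (∑ j ∈ Finset.range (k+1), (cb j * x ^ j) * (cb (k-j) * x ^ (k-j))) = x ^ k := by
    intro k
    have : ∀ j ∈ Finset.range (k+1), (cb j * x ^ j) * (cb (k-j) * x ^ (k-j))
        = (cb j * cb (k-j)) * x ^ k := by
      intro j hj
      have hj' : j ≤ k := Nat.lt_succ_iff.mp (Finset.mem_range.mp hj)
      have : x ^ j * x ^ (k - j) = x ^ k := by
        rw [← pow_add, Nat.add_sub_cancel' hj']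
      calc (cb j * x ^ j) * (cb (k-j) * x ^ (k-j)) = (cb j * cb (k-j)) * (x ^ j * x ^ (k-j)) := by ring
        _ = (cb j * cb (k-j)) * x ^ k := by rw [this]
    rw [Finset.sum_congr rfl this, ← Finset.sum_mul, cb_conv k, one_mul]
  have hsq : f * f = (1 - x)⁻¹ := by
    rw [hcauchy]
    simp_rw [hterm]
    exact tsum_geometric_of_lt_one h0 h1
  have hfnn : 0 ≤ f := tsum_nonneg (fun k => by have := cb_nonneg k; positivity)
  have h1x : (0:ℝ) < 1 - x := by linarith
  have htgt : ((1 - x) ^ (-(2:ℝ)⁻¹)) * ((1 - x) ^ (-(2:ℝ)⁻¹)) = (1 - x)⁻¹ := by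
    rw [← Real.rpow_add h1x]
    norm_num [Real.rpow_neg_one]
  have htnn : 0 ≤ (1 - x) ^ (-(2:ℝ)⁻¹) := Real.rpow_nonneg h1x.le _
  have : f = (1 - x) ^ (-(2:ℝ)⁻¹) := by
    have h2 : f ^ 2 = ((1 - x) ^ (-(2:ℝ)⁻¹)) ^ 2 := by
      rw [sq, sq, hsq, htgt]
    calc f = √(f ^ 2) := (Real.sqrt_sq hfnn).symm
      _ = √(((1 - x) ^ (-(2:ℝ)⁻¹)) ^ 2) := by rw [h2]
      _ = (1 - x) ^ (-(2:ℝ)⁻¹) := Real.sqrt_sq htnn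
  rw [← this]
  exact hs.hasSum

open MeasureTheory Set


lemma betaFn_pos {a b : ℝ} (ha : 0 < a) (hb : 0 < b) : 0 < betaFn a b := by
  have h1 := Real.Gamma_pos_of_pos ha
  have h2 := Real.Gamma_pos_of_pos hb
  have h3 := Real.Gamma_pos_of_pos (show 0 < a + b by linarith)
  rw [betaFn]; positivity

lemma betaIntegral_ofReal {a b : ℝ} (ha : 0 < a) (hb : 0 < b) :
    Complex.betaIntegral (a : ℂ) (b : ℂ) = ((betaFn a b : ℝ) : ℂ) := by
  have ha' : 0 < (a : ℂ).re := by simpa using ha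
  have hb' : 0 < (b : ℂ).re := by simpa using hb
  have h := Complex.Gamma_mul_Gamma_eq_betaIntegral ha' hb'
  have hG : Complex.Gamma ((a:ℂ) + b) ≠ 0 := by
    rw [show ((a:ℂ) + b) = ((a + b : ℝ) : ℂ) by push_cast; ring, Complex.Gamma_ofReal]
    exact_mod_cast (Real.Gamma_pos_of_pos (by linarith)).ne'
  rw [betaFn]
  push_cast
  rw [← Complex.Gamma_ofReal, ← Complex.Gamma_ofReal, ← Complex.Gamma_ofReal] at *
  push_cast at *
  field_simp
  rw [h]; ring

lemma betaIntegral_real_integrand {a b x : ℝ} (hx0 : 0 ≤ x) (hx1 : x ≤ 1) :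
    (x : ℂ) ^ ((a:ℂ) - 1) * ((1:ℂ) - x) ^ ((b:ℂ) - 1)
      = ((x ^ (a-1) * (1-x) ^ (b-1) : ℝ) : ℂ) := by
  rw [show ((a:ℂ) - 1) = ((a - 1 : ℝ) : ℂ) by push_cast; ring,
    show ((b:ℂ) - 1) = ((b - 1 : ℝ) : ℂ) by push_cast; ring,
    show ((1:ℂ) - x) = ((1 - x : ℝ) : ℂ) by push_cast; ring,
    ← Complex.ofReal_cpow hx0, ← Complex.ofReal_cpow (by linarith), Complex.ofReal_mul]

lemma betaIntegral_real {a b : ℝ} (ha : 0 < a) (hb : 0 < b) :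
    ∫ x in Ioo (0:ℝ) 1, x ^ (a-1) * (1-x) ^ (b-1) = betaFn a b := by
  have ha' : 0 < (a : ℂ).re := by simpa using ha
  have hb' : 0 < (b : ℂ).re := by simpa using hb
  have h1 : Complex.betaIntegral (a : ℂ) (b : ℂ)
      = ((∫ x in (0:ℝ)..1, x ^ (a-1) * (1-x) ^ (b-1) : ℝ) : ℂ) := by
    rw [Complex.betaIntegral, ← intervalIntegral.integral_ofReal]
    refine intervalIntegral.integral_congr fun x hx => ?_
    rw [Set.uIcc_of_le (by norm_num : (0:ℝ) ≤ 1)] at hx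
    exact betaIntegral_real_integrand hx.1 hx.2
  rw [betaIntegral_ofReal ha hb] at h1
  have h2 : (∫ x in (0:ℝ)..1, x ^ (a-1) * (1-x) ^ (b-1) : ℝ) = betaFn a b := by
    exact_mod_cast h1.symm
  rw [← h2, intervalIntegral.integral_of_le (by norm_num : (0:ℝ) ≤ 1),
    integral_Ioc_eq_integral_Ioo]

lemma betaIntegrable {a b : ℝ} (ha : 0 < a) (hb : 0 < b) :
    IntegrableOn (fun x : ℝ => x ^ (a-1) * (1-x) ^ (b-1)) (Ioo (0:ℝ) 1) := by
  have ha' : 0 < (a : ℂ).re := by simpa using ha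
  have hb' : 0 < (b : ℂ).re := by simpa using hb
  have h := Complex.betaIntegral_convergent ha' hb'
  have h2 : IntegrableOn (fun x : ℝ => (x:ℂ) ^ ((a:ℂ)-1) * ((1:ℂ)-x) ^ ((b:ℂ)-1)) (Ioc (0:ℝ) 1) :=
    (intervalIntegrable_iff_integrableOn_Ioc_of_le (by norm_num : (0:ℝ) ≤ 1)).mp h
  have h3 : IntegrableOn (fun x : ℝ => RCLike.re ((x:ℂ) ^ ((a:ℂ)-1) * ((1:ℂ)-x) ^ ((b:ℂ)-1)))
      (Ioc (0:ℝ) 1) := h2.re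
  refine ((h3.mono_set Ioo_subset_Ioc_self).congr_fun (fun x hx => ?_) measurableSet_Ioo)
  simp only [betaIntegral_real_integrand hx.1.le hx.2.le]
  simp

lemma betaLintegral {a b : ℝ} (ha : 0 < a) (hb : 0 < b) :
    ∫⁻ x in Ioo (0:ℝ) 1, ENNReal.ofReal (x ^ (a-1) * (1-x) ^ (b-1))
      = ENNReal.ofReal (betaFn a b) := by
  rw [← betaIntegral_real ha hb,
    ← ofReal_integral_eq_lintegral_ofReal (betaIntegrable ha hb) ?_]
  filter_upwards [ae_restrict_mem measurableSet_Ioo] with x hx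
  have h1 : (0:ℝ) ≤ x := hx.1.le
  have h2 : (0:ℝ) ≤ 1 - x := by linarith [hx.2]
  positivity

lemma rpow_shift {t : ℝ} (ht : 0 < t) (a : ℝ) (k : ℕ) :
    t ^ (a-1) * t ^ (k:ℕ) = t ^ ((a+k)-1) := by
  rw [← Real.rpow_natCast t k, ← Real.rpow_add ht]
  congr 1; ring

lemma betaFn_add_nat {a b : ℝ} (ha : 0 < a) (hb : 0 < b) (k : ℕ) :
    betaFn (a + k) b = betaFn a b * (poch a k / poch (a+b) k) := by
  have hab : 0 < a + b := by linarith
  rw [betaFn, betaFn, Gamma_poch ha, show a + (k:ℝ) + b = (a+b) + k by ring, Gamma_poch hab]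
  have h1 : Real.Gamma (a+b) ≠ 0 := (Real.Gamma_pos_of_pos hab).ne'
  have h2 : poch (a+b) k ≠ 0 := (poch_pos hab k).ne'
  field_simp

lemma betaFn_add_le {a b : ℝ} (ha : 0 < a) (hb : 0 < b) (k : ℕ) :
    betaFn (a + k) b ≤ betaFn a b := by
  rw [betaFn_add_nat ha hb k]
  have h2 : 0 < poch (a+b) k := poch_pos (by linarith) k
  have h3 : poch a k ≤ poch (a+b) k := poch_le_poch ha (by linarith) k
  calc betaFn a b * (poch a k / poch (a+b) k) ≤ betaFn a b * 1 := by
        refine mul_le_mul_of_nonneg_left ?_ (betaFn_pos ha hb).le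
        rw [div_le_one h2]; exact h3
    _ = betaFn a b := mul_one _

lemma measurable_inner (a b c s : ℝ) :
    Measurable (fun t : ℝ => ENNReal.ofReal (t ^ (a-1) * (1-t) ^ (b-1) * (1 - s*t) ^ c)) := by
  refine Measurable.ennreal_ofReal ?_
  exact ((measurable_id.pow measurable_const).mul
    ((measurable_const.sub measurable_id).pow measurable_const)).mul
    ((measurable_const.sub (measurable_const.mul measurable_id)).pow measurable_const)

lemma inner_eval {a b s : ℝ} (ha : 0 < a) (hb : 0 < b) (hs0 : 0 ≤ s) (hs1 : s < 1) :
    ∫⁻ t in Set.Ioo (0:ℝ) 1,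
        ENNReal.ofReal (t ^ (a-1) * (1-t) ^ (b-1) * (1 - s*t) ^ (-(2:ℝ)⁻¹))
      = ∑' k : ℕ, ENNReal.ofReal ((cb k * s ^ k) * betaFn (a+k) b) := by
  have hpt : ∀ t ∈ Set.Ioo (0:ℝ) 1,
      ENNReal.ofReal (t ^ (a-1) * (1-t) ^ (b-1) * (1 - s*t) ^ (-(2:ℝ)⁻¹))
        = ∑' k : ℕ, ENNReal.ofReal ((cb k * s ^ k) * (t ^ ((a+k)-1) * (1-t) ^ (b-1))) := by
    intro t ht
    obtain ⟨ht0, ht1⟩ := ht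
    have hst0 : 0 ≤ s * t := by positivity
    have hst1 : s * t < 1 := by nlinarith
    have hval : (1 - s*t) ^ (-(2:ℝ)⁻¹) = ∑' k : ℕ, cb k * (s*t) ^ k :=
      (hasSum_cb hst0 hst1).tsum_eq.symm
    have h1t : (0:ℝ) ≤ 1 - t := by linarith
    rw [hval, ← tsum_mul_left,
      ENNReal.ofReal_tsum_of_nonneg
        (fun k => by have := cb_nonneg k; positivity)
        (((summable_cb_pow hst0 hst1)).mul_left _)]
    congr 1 with k
    congr 1
    rw [mul_pow, ← rpow_shift ht0 a k]
    ring
  rw [setLIntegral_congr_fun measurableSet_Ioo hpt,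
    lintegral_tsum (fun k => by
      refine Measurable.aemeasurable (Measurable.ennreal_ofReal ?_)
      exact measurable_const.mul ((measurable_id.pow measurable_const).mul
        ((measurable_const.sub measurable_id).pow measurable_const)))]
  congr 1 with k
  have hck : 0 ≤ cb k * s ^ k := by have := cb_nonneg k; positivity
  calc ∫⁻ t in Set.Ioo (0:ℝ) 1,
        ENNReal.ofReal ((cb k * s ^ k) * (t ^ ((a+k)-1) * (1-t) ^ (b-1)))
      = ∫⁻ t in Set.Ioo (0:ℝ) 1,
          ENNReal.ofReal (cb k * s ^ k) * ENNReal.ofReal (t ^ ((a+k)-1) * (1-t) ^ (b-1)) := by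
        congr 1 with t
        rw [ENNReal.ofReal_mul hck]
    _ = ENNReal.ofReal (cb k * s ^ k) *
          ∫⁻ t in Set.Ioo (0:ℝ) 1, ENNReal.ofReal (t ^ ((a+k)-1) * (1-t) ^ (b-1)) :=
        lintegral_const_mul' _ _ ENNReal.ofReal_ne_top
    _ = ENNReal.ofReal (cb k * s ^ k) * ENNReal.ofReal (betaFn (a+k) b) := by
        rw [betaLintegral (by positivity) hb]
    _ = ENNReal.ofReal ((cb k * s ^ k) * betaFn (a+k) b) := (ENNReal.ofReal_mul hck).symm

lemma summable_beta_series {a b s : ℝ} (ha : 0 < a) (hb : 0 < b) (hs0 : 0 ≤ s) (hs1 : s < 1) :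
    Summable (fun k : ℕ => (cb k * s ^ k) * betaFn (a+k) b) := by
  refine Summable.of_nonneg_of_le
    (fun k => by have h1 := cb_nonneg k; have h2 := betaFn_pos (show (0:ℝ) < a + k by positivity) hb; positivity)
    (fun k => ?_) ((summable_cb_pow hs0 hs1).mul_right (betaFn a b))
  calc (cb k * s ^ k) * betaFn (a+k) b ≤ (cb k * s ^ k) * betaFn a b := by
        refine mul_le_mul_of_nonneg_left (betaFn_add_le ha hb k) ?_
        have := cb_nonneg k; positivity
    _ = cb k * s ^ k * betaFn a b := rfl

lemma outer_eval {a b p q : ℝ} (ha : 0 < a) (hb : 0 < b) (hp : 0 < p) (hq : 0 < q) :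
    ∫⁻ s in Set.Ioo (0:ℝ) 1, ENNReal.ofReal (s ^ (p-1) * (1-s) ^ (q-1)) *
        (∫⁻ t in Set.Ioo (0:ℝ) 1,
          ENNReal.ofReal (t ^ (a-1) * (1-t) ^ (b-1) * (1 - s*t) ^ (-(2:ℝ)⁻¹)))
      = ∑' k : ℕ, ENNReal.ofReal (cb k * betaFn (a+k) b * betaFn (p+k) q) := by
  have hpt : ∀ s ∈ Set.Ioo (0:ℝ) 1,
      ENNReal.ofReal (s ^ (p-1) * (1-s) ^ (q-1)) *
        (∫⁻ t in Set.Ioo (0:ℝ) 1,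
          ENNReal.ofReal (t ^ (a-1) * (1-t) ^ (b-1) * (1 - s*t) ^ (-(2:ℝ)⁻¹)))
      = ∑' k : ℕ, ENNReal.ofReal (cb k * betaFn (a+k) b)
          * ENNReal.ofReal (s ^ ((p+k)-1) * (1-s) ^ (q-1)) := by
    intro s hs
    obtain ⟨hs0, hs1⟩ := hs
    rw [inner_eval ha hb hs0.le hs1, ← ENNReal.tsum_mul_left]
    congr 1 with k
    have h1 : (0:ℝ) ≤ cb k := cb_nonneg k
    have h2 : 0 < betaFn (a+k) b := betaFn_pos (by positivity) hb
    have h1s : (0:ℝ) ≤ 1 - s := by linarith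
    rw [← ENNReal.ofReal_mul (by positivity), ← ENNReal.ofReal_mul (by positivity)]
    congr 1
    rw [← rpow_shift hs0 p k]
    ring
  rw [setLIntegral_congr_fun measurableSet_Ioo hpt,
    lintegral_tsum (fun k => by
      refine Measurable.aemeasurable (Measurable.mul measurable_const (Measurable.ennreal_ofReal ?_))
      exact (measurable_id.pow measurable_const).mul
        ((measurable_const.sub measurable_id).pow measurable_const))]
  congr 1 with k
  have h1 := cb_nonneg k
  have h2 := betaFn_pos (show (0:ℝ) < a + (k:ℝ) by positivity) hb
  rw [lintegral_const_mul' _ _ ENNReal.ofReal_ne_top, betaLintegral (by positivity) hq,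
    ← ENNReal.ofReal_mul (by positivity)]

lemma lintegral_image_1d {s : Set ℝ} {f f' : ℝ → ℝ} (hs : MeasurableSet s)
    (hf' : ∀ x ∈ s, HasDerivWithinAt f (f' x) s x) (hf : Set.InjOn f s) (g : ℝ → ENNReal) :
    ∫⁻ x in f '' s, g x = ∫⁻ x in s, ENNReal.ofReal |f' x| * g (f x) := by
  simpa only [ContinuousLinearMap.det_toSpanSingleton] using
    MeasureTheory.lintegral_image_eq_lintegral_abs_det_fderiv_mul MeasureTheory.volume hs
      (fun x hx => (hf' x hx).hasFDerivWithinAt) hf g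

section CoV
variable {r s : ℝ}

lemma cov_lemma (hr0 : 0 < r) (hr1 : r < 1) (hs0 : 0 < s) (hs1 : s < 1) :
    ∫⁻ t in Set.Ioo (0:ℝ) 1,
        ENNReal.ofReal (t ^ (r-1) * (1-t) ^ ((1-r)-1) * (1 - s*t) ^ (-(2:ℝ)⁻¹))
      = ENNReal.ofReal ((1-s) ^ ((2:ℝ)⁻¹ - r)) *
        ∫⁻ v in Set.Ioo (0:ℝ) 1,
          ENNReal.ofReal (v ^ ((1-r)-1) * (1-v) ^ (r-1) * (1 - s*v) ^ (-(2:ℝ)⁻¹)) := by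
  set φ : ℝ → ℝ := fun v => (1-v)/(1-s*v) with hφ
  have hB : ∀ v ∈ Set.Ioo (0:ℝ) 1, 0 < 1 - s*v := by
    intro v hv
    nlinarith [hv.1, hv.2]
  have hmem : ∀ v ∈ Set.Ioo (0:ℝ) 1, φ v ∈ Set.Ioo (0:ℝ) 1 := by
    intro v hv
    obtain ⟨hv0, hv1⟩ := hv
    have h1 := hB v ⟨hv0, hv1⟩
    constructor
    · have : 0 < 1 - v := by linarith
      positivity
    · rw [div_lt_one h1]
      nlinarith
  have hinvol : ∀ v ∈ Set.Ioo (0:ℝ) 1, φ (φ v) = v := by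
    intro v hv
    have h1 := hB v hv
    have h2 : (1:ℝ) - s * ((1-v)/(1-s*v)) = (1-s)/(1-s*v) := by
      field_simp
      ring
    simp only [hφ, h2]
    rw [show (1:ℝ) - (1-v)/(1-s*v) = (v*(1-s))/(1-s*v) by
      rw [eq_div_iff h1.ne', sub_mul, div_mul_cancel₀ _ h1.ne']; ring]
    have h3 : (1:ℝ) - s ≠ 0 := by linarith
    field_simp
    exact mul_div_cancel_right₀ v (by nlinarith : (0:ℝ) < 1 - v*s).ne'
  have himage : φ '' Set.Ioo (0:ℝ) 1 = Set.Ioo (0:ℝ) 1 := by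
    apply Set.Subset.antisymm
    · rintro x ⟨v, hv, rfl⟩
      exact hmem v hv
    · intro t ht
      exact ⟨φ t, hmem t ht, hinvol t ht⟩
  have hinj : Set.InjOn φ (Set.Ioo (0:ℝ) 1) := by
    intro u hu v hv huv
    have := congrArg φ huv
    rwa [hinvol u hu, hinvol v hv] at this
  have hderiv : ∀ v ∈ Set.Ioo (0:ℝ) 1,
      HasDerivWithinAt φ ((s-1)/(1-s*v)^2) (Set.Ioo (0:ℝ) 1) v := by
    intro v hv
    have h1 := hB v hv
    have hd : HasDerivAt φ ((s-1)/(1-s*v)^2) v := by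
      have hnum : HasDerivAt (fun v : ℝ => 1 - v) (-1) v := by
        simpa using (hasDerivAt_id v).const_sub 1
      have hden : HasDerivAt (fun v : ℝ => 1 - s*v) (-s) v := by
        simpa using (hasDerivAt_id v).const_mul s |>.const_sub 1
      have := hnum.div hden h1.ne'
      exact this.congr_deriv (by ring)
    exact hd.hasDerivWithinAt
  calc ∫⁻ t in Set.Ioo (0:ℝ) 1,
        ENNReal.ofReal (t ^ (r-1) * (1-t) ^ ((1-r)-1) * (1 - s*t) ^ (-(2:ℝ)⁻¹))
      = ∫⁻ t in φ '' Set.Ioo (0:ℝ) 1,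
        ENNReal.ofReal (t ^ (r-1) * (1-t) ^ ((1-r)-1) * (1 - s*t) ^ (-(2:ℝ)⁻¹)) := by
        rw [himage]
    _ = ∫⁻ v in Set.Ioo (0:ℝ) 1, ENNReal.ofReal |((s-1)/(1-s*v)^2)| *
          ENNReal.ofReal ((φ v) ^ (r-1) * (1-(φ v)) ^ ((1-r)-1) * (1 - s*(φ v)) ^ (-(2:ℝ)⁻¹)) :=
        lintegral_image_1d measurableSet_Ioo hderiv hinj _
    _ = ∫⁻ v in Set.Ioo (0:ℝ) 1, ENNReal.ofReal ((1-s) ^ ((2:ℝ)⁻¹ - r)) *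
          ENNReal.ofReal (v ^ ((1-r)-1) * (1-v) ^ (r-1) * (1 - s*v) ^ (-(2:ℝ)⁻¹)) := by
        refine setLIntegral_congr_fun measurableSet_Ioo ?_
        intro v hv
        obtain ⟨hv0, hv1⟩ := hv
        beta_reduce
        have hBv := hB v ⟨hv0, hv1⟩
        have hA : (0:ℝ) < 1 - v := by linarith
        have hC : (0:ℝ) < 1 - s := by linarith
        have e1 : φ v = (1-v)/(1-s*v) := rfl
        have e2 : 1 - φ v = (v*(1-s))/(1-s*v) := by
          rw [e1, eq_div_iff hBv.ne', sub_mul, div_mul_cancel₀ _ hBv.ne']; ring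
        have e3 : 1 - s * φ v = (1-s)/(1-s*v) := by rw [e1]; field_simp; ring
        have e4 : |((s-1)/(1-s*v)^2)| = (1-s)/(1-s*v)^2 := by
          rw [abs_div, abs_of_neg (by linarith : s - 1 < 0),
            abs_of_pos (by positivity : (0:ℝ) < (1-s*v)^2)]
          ring
        rw [← ENNReal.ofReal_mul (by positivity), ← ENNReal.ofReal_mul (Real.rpow_nonneg hC.le _)]
        congr 1
        rw [e4, e1, e2, e3]
        have hφv0 : (0:ℝ) < (1-v)/(1-s*v) := by positivity
        have hvC : (0:ℝ) < v*(1-s) := by positivity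
        have hCB : (0:ℝ) < (1-s)/(1-s*v) := by positivity
        rw [Real.div_rpow hA.le hBv.le, Real.div_rpow hvC.le hBv.le, Real.div_rpow hC.le hBv.le,
          Real.mul_rpow hv0.le hC.le]
        have hexp2 : ((1-s*v):ℝ)^2 = Real.exp (2 * Real.log (1-s*v)) := by
          rw [show (2:ℝ) * Real.log (1-s*v) = Real.log ((1-s*v)^2) from by
              rw [Real.log_pow]; push_cast; ring,
            Real.exp_log (by positivity)]
        simp only [Real.rpow_def_of_pos hA, Real.rpow_def_of_pos hBv,
          Real.rpow_def_of_pos hC, Real.rpow_def_of_pos hv0]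
        rw [hexp2, show (1-s : ℝ) = Real.exp (Real.log (1-s)) from (Real.exp_log hC).symm]
        simp only [div_eq_mul_inv, ← Real.exp_neg, ← Real.exp_add, Real.log_exp]
        congr 1
        ring
    _ = ENNReal.ofReal ((1-s) ^ ((2:ℝ)⁻¹ - r)) *
          ∫⁻ v in Set.Ioo (0:ℝ) 1,
            ENNReal.ofReal (v ^ ((1-r)-1) * (1-v) ^ (r-1) * (1 - s*v) ^ (-(2:ℝ)⁻¹)) :=
        lintegral_const_mul' _ _ ENNReal.ofReal_ne_top

end CoV

lemma summable_shift {p : ℝ} (hp : p < -1) : Summable (fun k : ℕ => ((k:ℝ)+1) ^ p) := by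
  have h1 := Real.summable_nat_rpow.mpr hp
  have h2 := (summable_nat_add_iff 1).mpr h1
  refine h2.congr fun k => ?_
  push_cast
  ring_nf

lemma cb_le (k : ℕ) : cb k ≤ ((k:ℝ)+1) ^ (-(2:ℝ)⁻¹) := by
  have h := poch_ratio_decay (y := 2⁻¹) (c := 2⁻¹) (by norm_num) (by norm_num) (by norm_num)
    (by norm_num) k
  rw [show (2⁻¹ + 2⁻¹ : ℝ) = 1 by norm_num, poch_one] at h
  exact h

lemma poch_div_fact_le {y : ℝ} (hy0 : 0 < y) (hy1 : y ≤ 1) (k : ℕ) :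
    poch y k / (Nat.factorial k : ℝ) ≤ ((k:ℝ)+1) ^ (y - 1) := by
  have h := poch_ratio_decay (y := y) (c := 1 - y) hy0 hy1 (by linarith) (by linarith) k
  rw [show (y + (1 - y) : ℝ) = 1 by ring, poch_one, show (-(1-y) : ℝ) = y - 1 by ring] at h
  exact h

lemma term_nonneg {a1 a2 a3 b1 b2 : ℝ} (h1 : 0 < a1) (h2 : 0 < a2) (h3 : 0 < a3)
    (h4 : 0 < b1) (h5 : 0 < b2) (k : ℕ) :
    0 ≤ poch a1 k * poch a2 k * poch a3 k / (poch b1 k * poch b2 k * (Nat.factorial k : ℝ)) := by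
  have p1 := poch_pos h1 k; have p2 := poch_pos h2 k; have p3 := poch_pos h3 k
  have p4 := poch_pos h4 k; have p5 := poch_pos h5 k
  have p6 : (0:ℝ) < (Nat.factorial k : ℝ) := by exact_mod_cast Nat.factorial_pos k
  positivity

lemma summable_L {r : ℝ} (hr0 : 0 < r) (hr1 : r < 1) :
    Summable (fun k : ℕ => poch 2⁻¹ k * poch 2⁻¹ k * poch r k /
      (poch 1 k * poch 1 k * (Nat.factorial k : ℝ))) := by
  refine Summable.of_nonneg_of_le
    (term_nonneg (by norm_num) (by norm_num) hr0 one_pos one_pos)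
    (fun k => ?_) (summable_shift (p := r - 2) (by linarith))
  have hfact : (0:ℝ) < (Nat.factorial k : ℝ) := by exact_mod_cast Nat.factorial_pos k
  have hE : poch 2⁻¹ k * poch 2⁻¹ k * poch r k / (poch 1 k * poch 1 k * (Nat.factorial k : ℝ))
      = cb k * cb k * (poch r k / (Nat.factorial k : ℝ)) := by
    rw [cb, poch_one]
    field_simp
  rw [hE]
  have b1 := cb_le k
  have b2 := poch_div_fact_le hr0 hr1.le k
  have n1 := cb_nonneg k
  have n2 : (0:ℝ) ≤ poch r k / (Nat.factorial k : ℝ) := by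
    have := poch_nonneg hr0 k; positivity
  have hk1 : (0:ℝ) < (k:ℝ)+1 := by positivity
  calc cb k * cb k * (poch r k / (Nat.factorial k : ℝ))
      ≤ (((k:ℝ)+1) ^ (-(2:ℝ)⁻¹) * ((k:ℝ)+1) ^ (-(2:ℝ)⁻¹)) * (((k:ℝ)+1) ^ (r-1)) := by
        refine mul_le_mul (mul_le_mul b1 b1 n1 (by positivity)) b2 n2 (by positivity)
    _ = ((k:ℝ)+1) ^ (r - 2) := by
        rw [← Real.rpow_add hk1, ← Real.rpow_add hk1]
        congr 1
        ring

lemma summable_R {r : ℝ} (hr0 : 0 < r) (hr1 : r < 1) :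
    Summable (fun k : ℕ => poch 2⁻¹ k * poch 2⁻¹ k * poch (1-r) k /
      (poch 1 k * poch (3/2 - r) k * (Nat.factorial k : ℝ))) := by
  have h1r : (0:ℝ) < 1 - r := by linarith
  refine Summable.of_nonneg_of_le
    (term_nonneg (by norm_num) (by norm_num) h1r one_pos (by linarith))
    (fun k => ?_) (summable_shift (p := -(3/2 : ℝ)) (by norm_num))
  have hfact : (0:ℝ) < (Nat.factorial k : ℝ) := by exact_mod_cast Nat.factorial_pos k
  have hw : (0:ℝ) < poch (3/2 - r) k := poch_pos (by linarith) k
  have hE : poch 2⁻¹ k * poch 2⁻¹ k * poch (1-r) k /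
        (poch 1 k * poch (3/2 - r) k * (Nat.factorial k : ℝ))
      = cb k * cb k * (poch (1-r) k / poch (3/2 - r) k) := by
    rw [cb, poch_one]
    field_simp
  rw [hE]
  have b1 := cb_le k
  have b3 : poch (1-r) k / poch (3/2 - r) k ≤ ((k:ℝ)+1) ^ (-(2:ℝ)⁻¹) := by
    have h := poch_ratio_decay (y := 1-r) (c := 2⁻¹) h1r (by linarith) (by norm_num)
      (by norm_num) k
    rwa [show (1 - r + 2⁻¹ : ℝ) = 3/2 - r by ring] at h
  have n1 := cb_nonneg k
  have n2 : (0:ℝ) ≤ poch (1-r) k / poch (3/2 - r) k := by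
    have := poch_nonneg h1r k; positivity
  have hk1 : (0:ℝ) < (k:ℝ)+1 := by positivity
  calc cb k * cb k * (poch (1-r) k / poch (3/2-r) k)
      ≤ (((k:ℝ)+1) ^ (-(2:ℝ)⁻¹) * ((k:ℝ)+1) ^ (-(2:ℝ)⁻¹)) * (((k:ℝ)+1) ^ (-(2:ℝ)⁻¹)) := by
        refine mul_le_mul (mul_le_mul b1 b1 n1 (by positivity)) b3 n2 (by positivity)
    _ = ((k:ℝ)+1) ^ (-(3/2:ℝ)) := by
        rw [← Real.rpow_add hk1, ← Real.rpow_add hk1]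
        congr 1
        norm_num

lemma key_identity {r : ℝ} (hr0 : 0 < r) (hr1 : r < 1) :
    Real.pi * threeF2 2⁻¹ 2⁻¹ r 1 1
      = (Real.Gamma 2⁻¹ * Real.Gamma (1-r) / Real.Gamma (3/2 - r))
        * threeF2 2⁻¹ 2⁻¹ (1-r) 1 (3/2 - r) := by
  have h1r : (0:ℝ) < 1 - r := by linarith
  have h32 : (0:ℝ) < 3/2 - r := by linarith
  have hg_r := Real.Gamma_pos_of_pos hr0
  have hg_1r := Real.Gamma_pos_of_pos h1r
  have hg_h := Real.Gamma_pos_of_pos (show (0:ℝ) < 2⁻¹ by norm_num)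
  have hg_32 := Real.Gamma_pos_of_pos h32
  have hpi := Real.pi_pos
  have hΓhsq : Real.Gamma 2⁻¹ * Real.Gamma 2⁻¹ = Real.pi := by
    rw [show (2⁻¹ : ℝ) = 1/2 by norm_num, Real.Gamma_one_half_eq]
    exact Real.mul_self_sqrt Real.pi_pos.le
  have hJ : ∫⁻ s in Set.Ioo (0:ℝ) 1, ENNReal.ofReal (s ^ ((2:ℝ)⁻¹-1) * (1-s) ^ ((2:ℝ)⁻¹-1)) *
        (∫⁻ t in Set.Ioo (0:ℝ) 1,
          ENNReal.ofReal (t ^ (r-1) * (1-t) ^ ((1-r)-1) * (1 - s*t) ^ (-(2:ℝ)⁻¹)))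
      = ∫⁻ s in Set.Ioo (0:ℝ) 1, ENNReal.ofReal (s ^ ((2:ℝ)⁻¹-1) * (1-s) ^ ((1-r)-1)) *
        (∫⁻ t in Set.Ioo (0:ℝ) 1,
          ENNReal.ofReal (t ^ ((1-r)-1) * (1-t) ^ (r-1) * (1 - s*t) ^ (-(2:ℝ)⁻¹))) := by
    refine setLIntegral_congr_fun measurableSet_Ioo ?_
    intro s hs
    obtain ⟨hs0, hs1⟩ := hs
    have hC : (0:ℝ) < 1 - s := by linarith
    have hsp : (0:ℝ) < s := hs0
    beta_reduce
    rw [cov_lemma hr0 hr1 hs0 hs1, ← mul_assoc,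
      ← ENNReal.ofReal_mul (by positivity)]
    congr 2
    rw [mul_assoc, ← Real.rpow_add hC]
    congr 2
    ring
  rw [outer_eval hr0 h1r (by norm_num) (by norm_num),
      outer_eval h1r hr0 (by norm_num) h1r] at hJ
  have cL : ∀ k : ℕ, cb k * betaFn (r+(k:ℝ)) (1-r) * betaFn ((2:ℝ)⁻¹+(k:ℝ)) 2⁻¹
      = (Real.pi * (Real.Gamma r * Real.Gamma (1-r)))
        * (poch 2⁻¹ k * poch 2⁻¹ k * poch r k /
            (poch 1 k * poch 1 k * (Nat.factorial k : ℝ))) := by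
    intro k
    have hfact : (0:ℝ) < (Nat.factorial k : ℝ) := by exact_mod_cast Nat.factorial_pos k
    have e1 : betaFn (r+(k:ℝ)) (1-r)
        = Real.Gamma r * poch r k * Real.Gamma (1-r) / (Nat.factorial k : ℝ) := by
      rw [betaFn, Gamma_poch hr0, show r+(k:ℝ)+(1-r) = 1+(k:ℝ) by ring, Gamma_poch one_pos,
        Real.Gamma_one, poch_one]
      ring
    have e2 : betaFn ((2:ℝ)⁻¹+(k:ℝ)) 2⁻¹
        = Real.Gamma 2⁻¹ * poch 2⁻¹ k * Real.Gamma 2⁻¹ / (Nat.factorial k : ℝ) := by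
      rw [betaFn, Gamma_poch (show (0:ℝ) < 2⁻¹ by norm_num),
        show (2:ℝ)⁻¹+(k:ℝ)+2⁻¹ = 1+(k:ℝ) by ring, Gamma_poch one_pos, Real.Gamma_one, poch_one]
      ring
    rw [e1, e2, cb, poch_one, ← hΓhsq]
    field_simp
  have cR : ∀ k : ℕ, cb k * betaFn ((1-r)+(k:ℝ)) r * betaFn ((2:ℝ)⁻¹+(k:ℝ)) (1-r)
      = ((Real.Gamma r * Real.Gamma (1-r))
          * (Real.Gamma 2⁻¹ * Real.Gamma (1-r) / Real.Gamma (3/2 - r)))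
        * (poch 2⁻¹ k * poch 2⁻¹ k * poch (1-r) k /
            (poch 1 k * poch (3/2-r) k * (Nat.factorial k : ℝ))) := by
    intro k
    have hfact : (0:ℝ) < (Nat.factorial k : ℝ) := by exact_mod_cast Nat.factorial_pos k
    have hpw : (0:ℝ) < poch (3/2 - r) k := poch_pos h32 k
    have e1 : betaFn ((1-r)+(k:ℝ)) r
        = Real.Gamma (1-r) * poch (1-r) k * Real.Gamma r / (Nat.factorial k : ℝ) := by
      rw [betaFn, Gamma_poch h1r, show (1-r)+(k:ℝ)+r = 1+(k:ℝ) by ring, Gamma_poch one_pos,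
        Real.Gamma_one, poch_one]
      ring
    have e2 : betaFn ((2:ℝ)⁻¹+(k:ℝ)) (1-r)
        = Real.Gamma 2⁻¹ * poch 2⁻¹ k * Real.Gamma (1-r)
            / (Real.Gamma (3/2-r) * poch (3/2-r) k) := by
      rw [betaFn, Gamma_poch (show (0:ℝ) < 2⁻¹ by norm_num),
        show (2:ℝ)⁻¹+(k:ℝ)+(1-r) = (3/2-r)+(k:ℝ) by ring, Gamma_poch h32]
    rw [e1, e2, cb, poch_one]
    field_simp
  have hLsum := summable_L hr0 hr1
  have hRsum := summable_R hr0 hr1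
  have hLnn : 0 ≤ threeF2 2⁻¹ 2⁻¹ r 1 1 :=
    tsum_nonneg (term_nonneg (by norm_num) (by norm_num) hr0 one_pos one_pos)
  have hRnn : 0 ≤ threeF2 2⁻¹ 2⁻¹ (1-r) 1 (3/2-r) :=
    tsum_nonneg (term_nonneg (by norm_num) (by norm_num) h1r one_pos (by linarith))
  have hJL : (∑' k:ℕ, ENNReal.ofReal
        (cb k * betaFn (r+(k:ℝ)) (1-r) * betaFn ((2:ℝ)⁻¹+(k:ℝ)) 2⁻¹))
      = ENNReal.ofReal ((Real.pi * (Real.Gamma r * Real.Gamma (1-r))) * threeF2 2⁻¹ 2⁻¹ r 1 1) := by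
    rw [tsum_congr (fun k => by
        rw [cL k, ENNReal.ofReal_mul (by positivity)]),
      ENNReal.tsum_mul_left,
      ← ENNReal.ofReal_tsum_of_nonneg
        (term_nonneg (by norm_num) (by norm_num) hr0 one_pos one_pos) hLsum,
      ← ENNReal.ofReal_mul (by positivity)]
    rw [threeF2]
  have hJR : (∑' k:ℕ, ENNReal.ofReal
        (cb k * betaFn ((1-r)+(k:ℝ)) r * betaFn ((2:ℝ)⁻¹+(k:ℝ)) (1-r)))
      = ENNReal.ofReal (((Real.Gamma r * Real.Gamma (1-r))
          * (Real.Gamma 2⁻¹ * Real.Gamma (1-r) / Real.Gamma (3/2 - r)))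
            * threeF2 2⁻¹ 2⁻¹ (1-r) 1 (3/2-r)) := by
    rw [tsum_congr (fun k => by
        rw [cR k, ENNReal.ofReal_mul (by positivity)]),
      ENNReal.tsum_mul_left,
      ← ENNReal.ofReal_tsum_of_nonneg
        (term_nonneg (by norm_num) (by norm_num) h1r one_pos (by linarith)) hRsum,
      ← ENNReal.ofReal_mul (by positivity)]
    rw [threeF2]
  rw [hJL, hJR] at hJ
  have hAB := (ENNReal.ofReal_eq_ofReal_iff (by positivity) (by positivity)).mp hJ
  have hG : Real.Gamma r * Real.Gamma (1-r) ≠ 0 := by positivity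
  exact mul_left_cancel₀ hG (by linear_combination hAB)

/-- F(r,1) = 2^{4−8r}·csc(πr)·F(1−r, 3/2−r) for 0 < r < 1. -/
theorem kummer_s_eq_one (r : ℚ) (hr0 : 0 < r) (hr1 : r < 1) :
    Fval r 1 = (2:ℝ) ^ ((4:ℝ) - 8 * (r:ℝ)) * (1 / Real.sin (Real.pi * (r:ℝ))) *
      Fval (1 - r) (3/2 - r) := by
  have hr0' : (0:ℝ) < (r:ℝ) := by exact_mod_cast hr0
  have hr1' : (r:ℝ) < 1 := by exact_mod_cast hr1
  have hdpos : (0:ℝ) < (r.den : ℝ) := by exact_mod_cast r.pos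
  have hden : (((1:ℚ) - r).den : ℝ) = (r.den : ℝ) := by
    have h1 : ((1:ℚ) - r).den ∣ r.den := by
      have h3 := Rat.add_den_dvd 1 (-r)
      simpa [Rat.den_neg_eq_den, sub_eq_add_neg] using h3
    have h2 : r.den ∣ ((1:ℚ) - r).den := by
      have h3 := Rat.add_den_dvd 1 (-(1 - r))
      have h4 : (1 + -(1 - r) : ℚ) = r := by ring
      rw [h4, Rat.den_neg_eq_den] at h3
      simpa using h3
    exact_mod_cast Nat.dvd_antisymm h1 h2
  have hsin : 0 < Real.sin (Real.pi * (r:ℝ)) :=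
    Real.sin_pos_of_pos_of_lt_pi (by positivity) (by nlinarith [Real.pi_pos])
  have hrefl : Real.Gamma (r:ℝ) * Real.Gamma (1 - (r:ℝ))
      = Real.pi / Real.sin (Real.pi * (r:ℝ)) := Real.Gamma_mul_Gamma_one_sub (r:ℝ)
  have hkey := key_identity hr0' hr1'
  have hb1 : betaFn (r:ℝ) (1 - (r:ℝ)) = Real.pi / Real.sin (Real.pi * (r:ℝ)) := by
    rw [betaFn, show (r:ℝ) + (1 - (r:ℝ)) = 1 by ring, Real.Gamma_one, div_one, hrefl]
  have hb2 : betaFn (1 - (r:ℝ)) 2⁻¹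
      = Real.Gamma 2⁻¹ * Real.Gamma (1 - (r:ℝ)) / Real.Gamma (3/2 - (r:ℝ)) := by
    rw [betaFn, show (1 - (r:ℝ)) + 2⁻¹ = 3/2 - (r:ℝ) by ring]
    ring
  have hexp : (2:ℝ) ^ ((4:ℝ) - 8*(r:ℝ)) * (2:ℝ) ^ ((1:ℝ) - 4*((1:ℝ)-(r:ℝ)))
      = (2:ℝ) ^ ((1:ℝ) - 4*(r:ℝ)) := by
    rw [← Real.rpow_add two_pos]
    congr 1
    ring
  rw [Fval, Fval, hden]
  push_cast
  rw [show ((1:ℝ)/2) = (2:ℝ)⁻¹ by norm_num,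
    show (3:ℝ)/2 - (r:ℝ) - (1 - (r:ℝ)) = (2:ℝ)⁻¹ by ring, hb1, hb2]
  rw [show (3:ℝ)/2 - (r:ℝ) = 3/2 - (r:ℝ) from rfl]
  linear_combination ((2:ℝ) ^ ((1:ℝ) - 4*(r:ℝ)) / (2 * (r.den:ℝ) * Real.sin (Real.pi * (r:ℝ)))) * hkey
    - ((Real.Gamma 2⁻¹ * Real.Gamma (1 - (r:ℝ)) / Real.Gamma (3/2 - (r:ℝ))
        * threeF2 2⁻¹ 2⁻¹ (1-(r:ℝ)) 1 (3/2 - (r:ℝ)))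
        / (2 * (r.den:ℝ) * Real.sin (Real.pi * (r:ℝ)))) * hexp
end
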